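/- A finite double groupoid T is vacant if and only if (a) every compatible pair (g,x) with r(x)=t(g) bounds at least one box (the filling condition), and (b) the core groupoids are discrete, i.e., every box whose left and bottom sides are identities is itself a double identity Θ_P. -/
import Mathlib


/-- A (finite) groupoid, presented algebraically: a set `A` of arrows over a base `P`,
with source `s`, target `e`, identities, a (total, junk-valued when undefined)
composition, and inverses. Composition is written left to right: `comp a b` is
defined when `e a = s b`. -/
structure Gpd (P : Type) (A : Type) where
  s : A → P
  e : A → P
  id : P → A
  comp : A → A → A
  inv : A → A
  s_id : ∀ p, s (id p) = p
  e_id : ∀ p, e (id p) = p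
  s_comp : ∀ a b, e a = s b → s (comp a b) = s a
  e_comp : ∀ a b, e a = s b → e (comp a b) = e b
  id_comp : ∀ a, comp (id (s a)) a = a
  comp_id : ∀ a, comp a (id (e a)) = a
  comp_assoc : ∀ a b c, e a = s b → e b = s c →
    comp (comp a b) c = comp a (comp b c)
  s_inv : ∀ a, s (inv a) = e a
  e_inv : ∀ a, e (inv a) = s a
  inv_comp : ∀ a, comp (inv a) a = id (e a)
  comp_inv : ∀ a, comp a (inv a) = id (s a)

/-- A finite double groupoid: boxes `B`, horizontal arrows `H`, vertical arrows `V`,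
points `P`; boxes carry a horizontal groupoid structure over `V`
(source = left side, target = right side) and a vertical groupoid structure over `H`
(source = top side, target = bottom side), compatible with the side groupoids,
satisfying the interchange law. -/
structure DoubleGroupoid where
  P : Type
  H : Type
  V : Type
  B : Type
  [fP : Fintype P]
  [fH : Fintype H]
  [fV : Fintype V]
  [fB : Fintype B]
  [dP : DecidableEq P]
  [dH : DecidableEq H]
  [dV : DecidableEq V]
  [dB : DecidableEq B]
  /-- horizontal arrows: source `s` = left point, target `e` = right point -/
  gH : Gpd P H
  /-- vertical arrows: source `s` = top point, target `e` = bottom point -/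
  gV : Gpd P V
  /-- horizontal composition of boxes; base `V`, source = left side, target = right side -/
  gBh : Gpd V B
  /-- vertical composition of boxes; base `H`, source = top side, target = bottom side -/
  gBv : Gpd H B
  corner_tl : ∀ A, gH.s (gBv.s A) = gV.s (gBh.s A)
  corner_tr : ∀ A, gH.e (gBv.s A) = gV.s (gBh.e A)
  corner_bl : ∀ A, gH.s (gBv.e A) = gV.e (gBh.s A)
  corner_br : ∀ A, gH.e (gBv.e A) = gV.e (gBh.e A)
  t_hcomp : ∀ A B, gBh.e A = gBh.s B →
    gBv.s (gBh.comp A B) = gH.comp (gBv.s A) (gBv.s B)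
  b_hcomp : ∀ A B, gBh.e A = gBh.s B →
    gBv.e (gBh.comp A B) = gH.comp (gBv.e A) (gBv.e B)
  l_vcomp : ∀ A B, gBv.e A = gBv.s B →
    gBh.s (gBv.comp A B) = gV.comp (gBh.s A) (gBh.s B)
  r_vcomp : ∀ A B, gBv.e A = gBv.s B →
    gBh.e (gBv.comp A B) = gV.comp (gBh.e A) (gBh.e B)
  t_idh : ∀ g, gBv.s (gBh.id g) = gH.id (gV.s g)
  b_idh : ∀ g, gBv.e (gBh.id g) = gH.id (gV.e g)
  l_idv : ∀ x, gBh.s (gBv.id x) = gV.id (gH.s x)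
  r_idv : ∀ x, gBh.e (gBv.id x) = gV.id (gH.e x)
  t_hinv : ∀ A, gBv.s (gBh.inv A) = gH.inv (gBv.s A)
  b_hinv : ∀ A, gBv.e (gBh.inv A) = gH.inv (gBv.e A)
  l_vinv : ∀ A, gBh.s (gBv.inv A) = gV.inv (gBh.s A)
  r_vinv : ∀ A, gBh.e (gBv.inv A) = gV.inv (gBh.e A)
  hinv_vinv : ∀ A, gBh.inv (gBv.inv A) = gBv.inv (gBh.inv A)
  idh_vcomp : ∀ g h, gV.e g = gV.s h →
    gBv.comp (gBh.id g) (gBh.id h) = gBh.id (gV.comp g h)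
  idv_hcomp : ∀ x y, gH.e x = gH.s y →
    gBh.comp (gBv.id x) (gBv.id y) = gBv.id (gH.comp x y)
  id_id : ∀ p, gBh.id (gV.id p) = gBv.id (gH.id p)
  interchange : ∀ A B C D,
    gBh.e A = gBh.s B → gBh.e C = gBh.s D →
    gBv.e A = gBv.s C → gBv.e B = gBv.s D →
    gBv.comp (gBh.comp A B) (gBh.comp C D) =
      gBh.comp (gBv.comp A C) (gBv.comp B D)

namespace DoubleGroupoid

instance (T : DoubleGroupoid) : Fintype T.P := T.fP
instance (T : DoubleGroupoid) : Fintype T.H := T.fH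
instance (T : DoubleGroupoid) : Fintype T.V := T.fV
instance (T : DoubleGroupoid) : Fintype T.B := T.fB
instance (T : DoubleGroupoid) : DecidableEq T.P := T.dP
instance (T : DoubleGroupoid) : DecidableEq T.H := T.dH
instance (T : DoubleGroupoid) : DecidableEq T.V := T.dV
instance (T : DoubleGroupoid) : DecidableEq T.B := T.dB

variable (T : DoubleGroupoid)

/-- top side of a box -/
def top (A : T.B) : T.H := T.gBv.s A
/-- bottom side of a box -/
def bot (A : T.B) : T.H := T.gBv.e A
/-- left side of a box -/
def left (A : T.B) : T.V := T.gBh.s A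
/-- right side of a box -/
def right (A : T.B) : T.V := T.gBh.e A

/-- horizontal composition -/
def hcomp (A B : T.B) : T.B := T.gBh.comp A B
/-- vertical composition ("A over B") -/
def vcomp (A B : T.B) : T.B := T.gBv.comp A B
/-- horizontal inverse -/
def hinv (A : T.B) : T.B := T.gBh.inv A
/-- vertical inverse -/
def vinv (A : T.B) : T.B := T.gBv.inv A
/-- total inverse `A⁻¹ = (Aʰ)ᵛ` -/
def tinv (A : T.B) : T.B := T.gBv.inv (T.gBh.inv A)

/-- top-left vertex -/
def tl (A : T.B) : T.P := T.gH.s (T.top A)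
/-- top-right vertex -/
def tr (A : T.B) : T.P := T.gH.e (T.top A)
/-- bottom-left vertex -/
def bl (A : T.B) : T.P := T.gH.s (T.bot A)
/-- bottom-right vertex -/
def br (A : T.B) : T.P := T.gH.e (T.bot A)
/-- right-top vertex (equal to `tr` by the corner compatibilities) -/
def rt (A : T.B) : T.P := T.gV.s (T.right A)
/-- right-bottom vertex -/
def rb (A : T.B) : T.P := T.gV.e (T.right A)
/-- left-top vertex -/
def lt (A : T.B) : T.P := T.gV.s (T.left A)
/-- left-bottom vertex -/
def lb (A : T.B) : T.P := T.gV.e (T.left A)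

/-- upper-left corner function: number of boxes with the same left and top sides -/
noncomputable def ulc (A : T.B) : ℕ :=
  Nat.card {U : T.B // T.left U = T.left A ∧ T.top U = T.top A}
/-- upper-right corner function: number of boxes with the same right and top sides -/
noncomputable def urc (A : T.B) : ℕ :=
  Nat.card {U : T.B // T.right U = T.right A ∧ T.top U = T.top A}
/-- lower-left corner function: number of boxes with the same left and bottom sides -/
noncomputable def llc (A : T.B) : ℕ :=
  Nat.card {U : T.B // T.left U = T.left A ∧ T.bot U = T.bot A}
/-- lower-right corner function: number of boxes with the same right and bottom sides -/
noncomputable def lrc (A : T.B) : ℕ :=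
  Nat.card {U : T.B // T.right U = T.right A ∧ T.bot U = T.bot A}

/-- the double identity box `Θ_P` at a point -/
def thetaBox (p : T.P) : T.B := T.gBv.id (T.gH.id p)

/-- the filling condition: every compatible pair (right side, top side) bounds a box -/
def Filling : Prop :=
  ∀ (g : T.V) (x : T.H), T.gH.e x = T.gV.s g →
    ∃ A : T.B, T.top A = x ∧ T.right A = g

/-- membership in the core groupoid `D`: the left and bottom sides are identities -/
def isCoreD (D : T.B) : Prop :=
  T.left D = T.gV.id (T.gV.s (T.left D)) ∧ T.bot D = T.gH.id (T.gH.s (T.bot D))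

/-- membership in the core groupoid `E`: the right and top sides are identities -/
def isCoreE (E : T.B) : Prop :=
  T.right E = T.gV.id (T.gV.s (T.right E)) ∧ T.top E = T.gH.id (T.gH.s (T.top E))

/-- `θ(p)`: the number of boxes whose left and bottom sides are identities at `p` -/
noncomputable def thetaLB (p : T.P) : ℕ :=
  Nat.card {U : T.B // T.left U = T.gV.id p ∧ T.bot U = T.gH.id p}

end DoubleGroupoid

/-- vacancy: each compatible pair (top, right side) bounds exactly one box. -/
def DoubleGroupoid.Vacant (T : DoubleGroupoid) : Prop :=
  ∀ (g : T.V) (x : T.H), T.gH.e x = T.gV.s g →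
    ∃! A : T.B, T.top A = x ∧ T.right A = g

namespace Gpd

theorem inv_id' {P A : Type} (G : Gpd P A) (p : P) : G.inv (G.id p) = G.id p := by
  have h1 : G.comp (G.id p) (G.inv (G.id p)) = G.id (G.s (G.id p)) := G.comp_inv _
  rw [G.s_id] at h1
  have h2 := G.id_comp (G.inv (G.id p))
  rw [G.s_inv, G.e_id] at h2
  rw [← h2, h1]

theorem inv_inv' {P A : Type} (G : Gpd P A) (a : A) : G.inv (G.inv a) = a := by
  have h := G.comp_assoc a (G.inv a) (G.inv (G.inv a)) (G.s_inv a).symm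
    (G.s_inv (G.inv a)).symm
  rw [G.comp_inv a, G.comp_inv (G.inv a), G.s_inv a, G.comp_id a] at h
  have h2 := G.id_comp (G.inv (G.inv a))
  rw [G.s_inv, G.e_inv] at h2
  rw [h2] at h
  exact h

end Gpd

namespace DoubleGroupoid

variable {T : DoubleGroupoid}

theorem top_tinv (A : T.B) : T.top (T.tinv A) = T.gH.inv (T.bot A) := by
  show T.gBv.s (T.gBv.inv (T.gBh.inv A)) = _
  rw [T.gBv.s_inv, T.b_hinv]
  rfl

theorem bot_tinv (A : T.B) : T.bot (T.tinv A) = T.gH.inv (T.top A) := by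
  show T.gBv.e (T.gBv.inv (T.gBh.inv A)) = _
  rw [T.gBv.e_inv, T.t_hinv]
  rfl

theorem left_tinv (A : T.B) : T.left (T.tinv A) = T.gV.inv (T.right A) := by
  show T.gBh.s (T.gBv.inv (T.gBh.inv A)) = _
  rw [T.l_vinv, T.gBh.s_inv]
  rfl

theorem right_tinv (A : T.B) : T.right (T.tinv A) = T.gV.inv (T.left A) := by
  show T.gBh.e (T.gBv.inv (T.gBh.inv A)) = _
  rw [T.r_vinv, T.gBh.e_inv]
  rfl

theorem tinv_tinv (A : T.B) : T.tinv (T.tinv A) = A := by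
  show T.gBv.inv (T.gBh.inv (T.gBv.inv (T.gBh.inv A))) = A
  rw [T.hinv_vinv, T.gBv.inv_inv', T.gBh.inv_inv']

theorem tinv_theta (p : T.P) : T.tinv (T.thetaBox p) = T.thetaBox p := by
  show T.gBv.inv (T.gBh.inv (T.gBv.id (T.gH.id p))) = T.gBv.id (T.gH.id p)
  rw [← T.id_id, Gpd.inv_id', T.id_id, Gpd.inv_id']

theorem top_theta (p : T.P) : T.top (T.thetaBox p) = T.gH.id p :=
  T.gBv.s_id _

theorem right_theta (p : T.P) : T.right (T.thetaBox p) = T.gV.id p := by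
  show T.gBh.e (T.gBv.id (T.gH.id p)) = _
  rw [T.r_idv, T.gH.e_id]

/-- core-E discreteness from core-D discreteness -/
theorem coreE_theta (h : ∀ D : T.B, T.isCoreD D → ∃ p : T.P, D = T.thetaBox p)
    (E : T.B) (a b : T.P) (hTop : T.top E = T.gH.id a)
    (hRight : T.right E = T.gV.id b) : ∃ p : T.P, E = T.thetaBox p := by
  have hL : T.left (T.tinv E) = T.gV.id b := by
    rw [left_tinv, hRight, T.gV.inv_id']
  have hB : T.bot (T.tinv E) = T.gH.id a := by
    rw [bot_tinv, hTop, T.gH.inv_id']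
  have hcore : T.isCoreD (T.tinv E) := by
    constructor
    · rw [hL, T.gV.s_id]
    · rw [hB, T.gH.s_id]
  obtain ⟨p, hp⟩ := h (T.tinv E) hcore
  exact ⟨p, by rw [← T.tinv_tinv E, hp, T.tinv_theta]⟩

/-- Key lemma: under core discreteness, a box whose right side is the identity
is a vertical identity on its top. -/
theorem right_id_eq (h : ∀ D : T.B, T.isCoreD D → ∃ p : T.P, D = T.thetaBox p)
    (M : T.B) (hR : T.right M = T.gV.id (T.gH.e (T.top M))) :
    M = T.gBv.id (T.top M) := by
  set y := T.top M with hy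
  set q := T.gH.s y with hq
  set r := T.gH.e y with hr
  set Z := T.gBv.id y with hZ
  have hsZ : T.gBh.s Z = T.gV.id q := by rw [hZ, T.l_idv]
  have heZ : T.gBh.e Z = T.gV.id r := by rw [hZ, T.r_idv]
  have hc : T.gBh.e M = T.gBh.s (T.gBh.inv Z) := by
    rw [T.gBh.s_inv, heZ]; exact hR
  set G := T.gBh.comp M (T.gBh.inv Z) with hG
  have hTopG : T.top G = T.gH.id q := by
    show T.gBv.s G = _
    rw [hG, T.t_hcomp M (T.gBh.inv Z) hc, T.t_hinv]
    have : T.gBv.s Z = y := T.gBv.s_id y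
    rw [this]
    exact T.gH.comp_inv y
  have hRightG : T.right G = T.gV.id q := by
    show T.gBh.e G = _
    rw [hG, T.gBh.e_comp M (T.gBh.inv Z) hc, T.gBh.e_inv, hsZ]
  obtain ⟨p, hp⟩ := coreE_theta h G q q hTopG hRightG
  have hpq : p = q := by
    have h1 : T.gH.id q = T.gH.id p := by rw [← hTopG, hp, top_theta]
    have h2 := congrArg T.gH.s h1
    rw [T.gH.s_id, T.gH.s_id] at h2
    exact h2.symm
  have hMG : T.gBh.comp G Z = M := by
    rw [hG, T.gBh.comp_assoc M (T.gBh.inv Z) Z hc (T.gBh.e_inv Z),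
      T.gBh.inv_comp Z, heZ, ← hR]
    exact T.gBh.comp_id M
  have hGZ : T.gBh.comp G Z = Z := by
    rw [hp, hpq]
    show T.gBh.comp (T.gBv.id (T.gH.id q)) Z = Z
    rw [← T.id_id, ← hsZ]
    exact T.gBh.id_comp Z
  rw [← hMG, hGZ]

end DoubleGroupoid

/-- `T` is vacant iff the filling condition holds and the core
groupoid is discrete, i.e. every box with identity left and bottom sides is a
double identity `Θ_P`. -/
theorem stmt10 (T : DoubleGroupoid) :
    T.Vacant ↔
      (T.Filling ∧ ∀ D : T.B, T.isCoreD D → ∃ p : T.P, D = T.thetaBox p) := by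
  constructor
  · intro hV
    constructor
    · intro g x hgx
      obtain ⟨A, hA, _⟩ := hV g x hgx
      exact ⟨A, hA⟩
    · intro D hD
      obtain ⟨hL, hB⟩ := hD
      set b := T.gH.s (T.bot D) with hb
      have hab : T.gV.s (T.left D) = b := by
        have h1 := T.corner_bl D
        -- h1 : T.gH.s (T.gBv.e D) = T.gV.e (T.gBh.s D)
        have h2 : T.gV.e (T.left D) = T.gV.s (T.left D) := by
          conv_lhs => rw [hL]
          rw [T.gV.e_id]
        have : b = T.gV.e (T.left D) := h1
        rw [this, h2]
      have hTopE : T.top (T.tinv D) = T.gH.id b := by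
        rw [DoubleGroupoid.top_tinv, hB, T.gH.inv_id']
      have hRightE : T.right (T.tinv D) = T.gV.id b := by
        rw [DoubleGroupoid.right_tinv, hL, T.gV.inv_id', hab]
      have hcompat : T.gH.e (T.gH.id b) = T.gV.s (T.gV.id b) := by
        rw [T.gH.e_id, T.gV.s_id]
      obtain ⟨A, _, hUniq⟩ := hV (T.gV.id b) (T.gH.id b) hcompat
      have hE : T.tinv D = A := hUniq _ ⟨hTopE, hRightE⟩
      have hTh : T.thetaBox b = A :=
        hUniq _ ⟨DoubleGroupoid.top_theta b, DoubleGroupoid.right_theta b⟩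
      refine ⟨b, ?_⟩
      rw [← T.tinv_tinv D, hE, ← hTh, T.tinv_theta]
  · rintro ⟨hF, hD⟩ g x hgx
    obtain ⟨A, hA1, hA2⟩ := hF g x hgx
    refine ⟨A, ⟨hA1, hA2⟩, ?_⟩
    rintro B ⟨hB1, hB2⟩
    have hc : T.gBv.e (T.gBv.inv A) = T.gBv.s B := by
      rw [T.gBv.e_inv]
      show T.top A = T.top B
      rw [hA1, hB1]
    set M := T.gBv.comp (T.gBv.inv A) B with hM
    have hTopM : T.top M = T.bot A := by
      show T.gBv.s M = _
      rw [hM, T.gBv.s_comp _ _ hc, T.gBv.s_inv]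
      rfl
    have hRightM : T.right M = T.gV.id (T.gV.e g) := by
      show T.gBh.e M = _
      rw [hM, T.r_vcomp _ _ hc, T.r_vinv]
      show T.gV.comp (T.gV.inv (T.right A)) (T.right B) = _
      rw [hA2, hB2]
      exact T.gV.inv_comp g
    have hbr : T.gH.e (T.top M) = T.gV.e g := by
      rw [hTopM]
      show T.gH.e (T.gBv.e A) = _
      rw [T.corner_br, ← hA2]
      rfl
    have hMid : M = T.gBv.id (T.top M) := by
      apply DoubleGroupoid.right_id_eq hD
      rw [hRightM, hbr]
    have h1 : T.gBv.comp A M = A := by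
      rw [hMid, hTopM]
      exact T.gBv.comp_id A
    have h2 : T.gBv.comp A M = B := by
      rw [hM, ← T.gBv.comp_assoc A (T.gBv.inv A) B (T.gBv.s_inv A).symm hc,
        T.gBv.comp_inv A]
      have : T.gBv.s A = T.gBv.s B := by
        show T.top A = T.top B
        rw [hA1, hB1]
      rw [this]
      exact T.gBv.id_comp B
    rw [← h2, h1]
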